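/- arXiv:1310.5011 — 2 statements merged into one kernel-verified Lean document; each statement's English description precedes it below -/
import Mathlib

section
/- An equation s = t between terms over the meadow signature Σ_m = (0,1,−,+,·,⁻¹) holds in every meadow of characteristic 0 if and only if it holds in the zero-totalized field of complex numbers ℂ₀ (the complex numbers with their usual operations and inverse satisfying 0⁻¹ = 0). -/
/-- A meadow: a commutative ring with a total inverse operation satisfying
`(x⁻¹)⁻¹ = x` and the restricted inverse law `x * (x * x⁻¹) = x`. -/
class Meadow (M : Type) extends CommRing M, Inv M where
  minv_inv : ∀ x : M, x⁻¹⁻¹ = x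
  ril : ∀ x : M, x * (x * x⁻¹) = x

/-- The Inverse Law `IL`: a cancellation meadow is a meadow satisfying it. -/
def InverseLaw (M : Type) [Meadow M] : Prop :=
  ∀ x : M, x ≠ 0 → x * x⁻¹ = 1

/-- Terms over the meadow signature `Σ_m = (0,1,−,+,·,⁻¹)` with variables in `ℕ`. -/
inductive MTerm : Type
  | var : ℕ → MTerm
  | zero : MTerm
  | one : MTerm
  | neg : MTerm → MTerm
  | add : MTerm → MTerm → MTerm
  | mul : MTerm → MTerm → MTerm
  | inv : MTerm → MTerm

def MTerm.eval {M : Type} [Zero M] [One M] [Neg M] [Add M] [Mul M] [Inv M]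
    (ρ : ℕ → M) : MTerm → M
  | .var v => ρ v
  | .zero => 0
  | .one => 1
  | .neg t => -(t.eval ρ)
  | .add s t => s.eval ρ + t.eval ρ
  | .mul s t => s.eval ρ * t.eval ρ
  | .inv t => (t.eval ρ)⁻¹

/-- A meadow has characteristic 0 if `n · n⁻¹ = 1` for every positive integer `n`. -/
def MeadowChar0 (M : Type) [Meadow M] : Prop :=
  ∀ n : ℕ, 0 < n → (n : M) * (n : M)⁻¹ = 1

/-!
A meadow is reduced: `x * x = 0` gives `x = x * x * x⁻¹ = 0`. Hence two distinct elements of a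
meadow are separated by a ring homomorphism into a field (the fraction field of a quotient by a
suitable prime ideal). Any such homomorphism preserves the inverse, and it sends the positive
integers, which are invertible in a meadow of characteristic 0, to nonzero elements, so the field
has characteristic 0. Finally an equation valid in `ℂ` holds in every field of characteristic 0,
since the values of an assignment generate a countable subfield, and countable fields of
characteristic 0 embed into `ℂ`.
-/

lemma MTerm.eval_map {M K : Type} [Ring M] [Inv M] [Ring K] [Inv K]
    (f : M →+* K) (hf : ∀ x, f x⁻¹ = (f x)⁻¹) (ρ : ℕ → M) :
    ∀ u : MTerm, u.eval (f ∘ ρ) = f (u.eval ρ)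
  | .var _ => rfl
  | .zero => (map_zero f).symm
  | .one => (map_one f).symm
  | .neg u => by simp only [MTerm.eval, eval_map f hf ρ u, map_neg]
  | .add u v => by simp only [MTerm.eval, eval_map f hf ρ u, eval_map f hf ρ v, map_add]
  | .mul u v => by simp only [MTerm.eval, eval_map f hf ρ u, eval_map f hf ρ v, map_mul]
  | .inv u => by simp only [MTerm.eval, eval_map f hf ρ u, hf]

abbrev Field.toMeadow (K : Type) [Field K] : Meadow K where
  minv_inv := inv_inv
  ril x := by
    rcases eq_or_ne x 0 with rfl | hx
    · simp
    · rw [mul_inv_cancel₀ hx, mul_one]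

lemma Field.meadowChar0 (K : Type) [Field K] [CharZero K] :
    letI := Field.toMeadow K; MeadowChar0 K :=
  fun _ hn => mul_inv_cancel₀ (Nat.cast_ne_zero.mpr hn.ne')

namespace Meadow

variable {M : Type} [Meadow M]

lemma inv_eq_inv_mul_inv_mul (x : M) : x⁻¹ = x⁻¹ * x⁻¹ * x := by
  conv_lhs => rw [← ril x⁻¹, minv_inv]
  ring

instance : IsReduced M := by
  refine (isReduced_iff_pow_one_lt 2 one_lt_two).mpr fun x hx => ?_
  rw [← ril x, ← mul_assoc, ← sq, hx, zero_mul]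

/-- `x * (x * x⁻¹ - 1) = 0` forces `f x = 0` or `f x * f x⁻¹ = 1`. -/
lemma map_inv {K : Type} [DivisionRing K] (f : M →+* K) (x : M) : f x⁻¹ = (f x)⁻¹ := by
  rcases eq_or_ne (f x) 0 with hx | hx
  · rw [hx, inv_zero, inv_eq_inv_mul_inv_mul x, map_mul, hx, mul_zero]
  · have h : f x * (f x * f x⁻¹ - 1) = 0 := by
      rw [mul_sub, mul_one, ← map_mul, ← map_mul, ril, sub_self]
    have h1 : f x * f x⁻¹ = 1 := sub_eq_zero.mp ((mul_eq_zero.mp h).resolve_left hx)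
    exact eq_inv_of_mul_eq_one_right h1

lemma charZero_of_ringHom (hM : MeadowChar0 M) {K : Type} [DivisionRing K] (f : M →+* K) :
    CharZero K := by
  refine charZero_of_inj_zero fun n hn => ?_
  by_contra hn0
  have h := congrArg f (hM n (Nat.pos_of_ne_zero hn0))
  rw [map_mul, map_inv, map_natCast, hn, zero_mul, map_one] at h
  exact zero_ne_one h

end Meadow

lemma exists_ringHom_field_apply_ne_zero {R : Type} [CommRing R] [IsReduced R] {d : R}
    (hd : d ≠ 0) : ∃ (K : Type) (_ : Field K) (f : R →+* K), f d ≠ 0 := by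
  have hdn : d ∉ nilradical R := fun h => hd (mem_nilradical.mp h).eq_zero
  rw [nilradical_eq_sInf, Ideal.mem_sInf] at hdn
  push Not at hdn
  obtain ⟨P, hP, hdP⟩ := hdn
  have : P.IsPrime := hP
  refine ⟨FractionRing (R ⧸ P), inferInstance,
    (algebraMap (R ⧸ P) _).comp (Ideal.Quotient.mk P), fun h => hdP ?_⟩
  rw [RingHom.comp_apply, IsFractionRing.to_map_eq_zero_iff] at h
  exact Ideal.Quotient.eq_zero_iff_mem.mp h

lemma IsTranscendenceBasis.nonempty_ringHom_of_embedding {R K L : Type*} [Field R] [Field K]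
    [Field L] [IsAlgClosed L] [Algebra R K] [Algebra R L] {ι κ : Type*} {v : ι → K} {w : κ → L}
    (hv : IsTranscendenceBasis R v) (hw : IsTranscendenceBasis R w) (j : ι ↪ κ) :
    Nonempty (K →+* L) := by
  let A := Algebra.adjoin R (Set.range v)
  let g : A →ₐ[R] L :=
    (MvPolynomial.aeval w).comp ((MvPolynomial.rename j).comp hv.1.aevalEquiv.symm.toAlgHom)
  have hg : Function.Injective g :=
    (algebraicIndependent_iff_injective_aeval.mp hw.1).comp
      (MvPolynomial.rename_injective j j.injective) |>.comp hv.1.aevalEquiv.symm.injective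
  let : Algebra A L := g.toRingHom.toAlgebra
  have : Module.IsTorsionFree A L := by
    rw [Module.isTorsionFree_iff_faithfulSMul, faithfulSMul_iff_algebraMap_injective]
    exact hg
  have : Module.IsTorsionFree A K := by
    rw [Module.isTorsionFree_iff_faithfulSMul, faithfulSMul_iff_algebraMap_injective]
    exact Subtype.val_injective
  have : Algebra.IsAlgebraic A K := hv.isAlgebraic
  exact ⟨(IsAlgClosed.lift (R := A) (S := K) (M := L)).toRingHom⟩

open Cardinal in
/-- `ℂ` has transcendence degree `𝔠` over `ℚ`, so any countable transcendence basis embeds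
into one of `ℂ`. -/
lemma nonempty_ringHom_complex_of_countable (F : Type) [Field F] [CharZero F] [Countable F] :
    Nonempty (F →+* ℂ) := by
  obtain ⟨s, hs⟩ := exists_isTranscendenceBasis ℚ F
  obtain ⟨t, ht⟩ := exists_isTranscendenceBasis ℚ ℂ
  have ht_card : #t = 𝔠 := by
    rw [← mk_complex]
    refine (IsAlgClosed.cardinal_eq_cardinal_transcendence_basis_of_aleph0_lt' _ ht
      mk_le_aleph0 ?_).symm
    rw [mk_complex]
    exact aleph0_lt_continuum
  have hst : #s ≤ #t := ht_card ▸ mk_le_aleph0.trans aleph0_lt_continuum.le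
  exact hs.nonempty_ringHom_of_embedding ht (le_def s t |>.mp hst).some

lemma MTerm.eval_eq_of_forall_complex {s t : MTerm} (h : ∀ ρ : ℕ → ℂ, s.eval ρ = t.eval ρ)
    {K : Type} [Field K] [CharZero K] (ρ : ℕ → K) : s.eval ρ = t.eval ρ := by
  let F := Subfield.closure (Set.range ρ)
  have : Countable F := by
    have := (Set.countable_range ρ).to_subtype
    rw [← Cardinal.mk_le_aleph0_iff]
    exact (Subfield.cardinalMk_closure_le_max _).trans (max_le Cardinal.mk_le_aleph0 le_rfl)
  have : CharZero F := F.subtype.charZero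
  obtain ⟨g⟩ := nonempty_ringHom_complex_of_countable F
  let ρF : ℕ → F := fun n => ⟨ρ n, Subfield.subset_closure (Set.mem_range_self n)⟩
  have hF : s.eval ρF = t.eval ρF := g.injective <| by
    rw [← MTerm.eval_map g (map_inv₀ g), ← MTerm.eval_map g (map_inv₀ g)]
    exact h _
  have hK := congrArg F.subtype hF
  rwa [← MTerm.eval_map F.subtype (map_inv₀ _), ← MTerm.eval_map F.subtype (map_inv₀ _)] at hK

/-- an equation over `Σ_m` holds in every meadow of characteristic 0
iff it holds in the zero-totalized field of complex numbers `ℂ₀`. -/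
theorem meadow_char_zero_eq_iff_complex (s t : MTerm) :
    (∀ (M : Type) [Meadow M], MeadowChar0 M → ∀ ρ : ℕ → M, s.eval ρ = t.eval ρ) ↔
    (∀ ρ : ℕ → ℂ, s.eval ρ = t.eval ρ) := by
  refine ⟨fun H ρ => ?_, fun h M _ hM ρ => ?_⟩
  · let := Field.toMeadow ℂ
    exact H ℂ (Field.meadowChar0 ℂ) ρ
  · by_contra hne
    obtain ⟨K, _, f, hf⟩ := exists_ringHom_field_apply_ne_zero (sub_ne_zero.mpr hne)
    have := Meadow.charZero_of_ringHom hM f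
    have hK := MTerm.eval_eq_of_forall_complex h (f ∘ ρ)
    rw [MTerm.eval_map f (Meadow.map_inv f), MTerm.eval_map f (Meadow.map_inv f)] at hK
    exact hf (by rw [map_sub, hK, sub_self])
end

section
/- Every signed meadow is formally real: in every signed meadow, for every n and all elements x₀, …, xₙ, the equation (EFR_n): 0_{x₀²+⋯+xₙ²}·x₀ = 0 holds. -/
/-- The axioms `Signs` for a sign operation on a meadow, where `1_x = x·x⁻¹` and
`0_x = 1 - x·x⁻¹`. -/
structure IsSign (M : Type) [Meadow M] (sg : M → M) : Prop where
  s1 : ∀ x : M, sg (x * x⁻¹) = x * x⁻¹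
  s2 : ∀ x : M, sg (1 - x * x⁻¹) = 1 - x * x⁻¹
  s3 : sg (-1) = -1
  s4 : ∀ x : M, sg x⁻¹ = sg x
  s5 : ∀ x y : M, sg (x * y) = sg x * sg y
  s6 : ∀ x y : M,
    (1 - (sg x - sg y) * (sg x - sg y)⁻¹) * (sg (x + y) - sg x) = 0

/-!
Call `a` nonnegative when `s(a) = 1_a`. Squares are nonnegative, since `s(x²) = s(x)² = 1_x = 1_{x²}`.
For nonnegative `a, b`, axiom (S6) together with `0_b·s(a+b) = 0_b·s(a)` pins down
`s(a+b) = 1_a + 1_b - 1_a·1_b`; this is idempotent, and `s(a+b)² = 1_{a+b}`, so `a + b` is again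
nonnegative and `1_{a+b}·1_a = 1_a`, i.e. `0_{a+b}·a = 0`. Applied to `a = x₀²` and `b = x₁² + ⋯ + xₙ²`
this gives `(0_{a+b}·x₀)² = 0`, and a meadow has no nonzero nilpotents of order two.
-/

namespace Meadow

variable {M : Type} [Meadow M]

theorem inv_mul_inv_mul_self (x : M) : x⁻¹ * (x⁻¹ * x) = x⁻¹ := by
  simpa only [minv_inv] using ril x⁻¹

theorem isIdempotentElem_mul_inv (x : M) : IsIdempotentElem (x * x⁻¹) := by
  unfold IsIdempotentElem
  linear_combination x⁻¹ * ril x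

theorem inv_eq_of_mul_mul {a b : M} (hab : a * b * a = a) (hba : b * a * b = b) : a⁻¹ = b := by
  linear_combination (a * b ^ 2 * a⁻¹ - a * b * a⁻¹ ^ 2 + b ^ 2 - b * a⁻¹) * ril a +
    (a ^ 3 * b ^ 2 * a⁻¹ + a ^ 2 * b ^ 2 - 1) * inv_mul_inv_mul_self a - a⁻¹ ^ 2 * hab +
    (-(a ^ 3 * a⁻¹ ^ 3) - a ^ 2 * a⁻¹ ^ 2 + a * a⁻¹ + 1) * hba

theorem inv_eq_self_of_mul_mul_self {d : M} (h : d * d * d = d) : d⁻¹ = d :=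
  inv_eq_of_mul_mul h h

protected theorem mul_inv (x y : M) : (x * y)⁻¹ = x⁻¹ * y⁻¹ := by
  apply inv_eq_of_mul_mul
  · linear_combination y * (y * y⁻¹) * ril x + x * ril y
  · linear_combination y⁻¹ * (y⁻¹ * y) * inv_mul_inv_mul_self x + x⁻¹ * inv_mul_inv_mul_self y

theorem eq_zero_of_mul_self_eq_zero {z : M} (h : z * z = 0) : z = 0 := by
  linear_combination z⁻¹ * h - ril z

end Meadow

namespace IsSign

variable {M : Type} [Meadow M] {sg : M → M}

theorem mul_self (hs : IsSign M sg) (x : M) : sg x * sg x = x * x⁻¹ := by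
  rw [← hs.s1, hs.s5, hs.s4]

theorem nonneg_sq (hs : IsSign M sg) (x : M) : sg (x ^ 2) = x ^ 2 * (x ^ 2)⁻¹ := by
  rw [pow_two, hs.s5, hs.mul_self, Meadow.mul_inv]
  linear_combination -x⁻¹ * Meadow.ril x

theorem one_sub_mul_inv_mul_map_add (hs : IsSign M sg) (a b : M) :
    (1 - b * b⁻¹) * sg (a + b) = (1 - b * b⁻¹) * sg a := by
  have hkill : (1 - b * b⁻¹) * (a + b) = (1 - b * b⁻¹) * a := by
    linear_combination -Meadow.ril b
  simpa only [hs.s5, hs.s2] using congrArg sg hkill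

theorem map_add_of_nonneg (hs : IsSign M sg) {a b : M} (ha : sg a = a * a⁻¹)
    (hb : sg b = b * b⁻¹) :
    sg (a + b) = a * a⁻¹ + b * b⁻¹ - a * a⁻¹ * (b * b⁻¹) := by
  have ia := (Meadow.isIdempotentElem_mul_inv a).eq
  have ib := (Meadow.isIdempotentElem_mul_inv b).eq
  -- `d = 1_a - 1_b` satisfies `d³ = d`, hence `d⁻¹ = d` and `0_d = 1 - d²`.
  have hd : (sg a - sg b)⁻¹ = sg a - sg b := by
    rw [ha, hb]
    apply Meadow.inv_eq_self_of_mul_mul_self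
    linear_combination (a * a⁻¹ + 1 - 3 * (b * b⁻¹)) * ia + (3 * (a * a⁻¹) - b * b⁻¹ - 1) * ib
  have h6 := hs.s6 a b
  rw [hd, ha, hb] at h6
  have hzb := hs.one_sub_mul_inv_mul_map_add a b
  have hza := hs.one_sub_mul_inv_mul_map_add b a
  rw [ha] at hzb
  rw [add_comm, hb] at hza
  linear_combination h6 + a * a⁻¹ * hzb + b * b⁻¹ * hza +
    ((b * b⁻¹) ^ 2 + sg (a + b) - a * a⁻¹) * ia +
    (-(a * a⁻¹) ^ 2 - a * a⁻¹ + sg (a + b) + 1) * ib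

theorem nonneg_add (hs : IsSign M sg) {a b : M} (ha : sg a = a * a⁻¹)
    (hb : sg b = b * b⁻¹) : sg (a + b) = (a + b) * (a + b)⁻¹ := by
  have ia := (Meadow.isIdempotentElem_mul_inv a).eq
  have ib := (Meadow.isIdempotentElem_mul_inv b).eq
  have hform := hs.map_add_of_nonneg ha hb
  have hidem : sg (a + b) * sg (a + b) = sg (a + b) := by
    linear_combination (sg (a + b) + (a * a⁻¹ + b * b⁻¹ - a * a⁻¹ * (b * b⁻¹)) - 1) * hform +
      ((b * b⁻¹) ^ 2 - 2 * (b * b⁻¹) + 1) * ia + (1 - a * a⁻¹) * ib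
  linear_combination hs.mul_self (a + b) - hidem

theorem nonneg_sum (hs : IsSign M sg) {ι : Type*} (s : Finset ι) (f : ι → M)
    (hf : ∀ i ∈ s, sg (f i) = f i * (f i)⁻¹) :
    sg (∑ i ∈ s, f i) = (∑ i ∈ s, f i) * (∑ i ∈ s, f i)⁻¹ := by
  classical
  induction s using Finset.induction_on with
  | empty => simpa using hs.s1 0
  | insert i s hi ih =>
    rw [Finset.sum_insert hi]
    exact hs.nonneg_add (hf i (Finset.mem_insert_self i s))
      (ih fun j hj => hf j (Finset.mem_insert_of_mem hj))

theorem one_sub_mul_inv_mul_left_of_nonneg (hs : IsSign M sg) {a b : M}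
    (ha : sg a = a * a⁻¹) (hb : sg b = b * b⁻¹) :
    (1 - (a + b) * (a + b)⁻¹) * a = 0 := by
  linear_combination a * hs.nonneg_add ha hb - a * hs.map_add_of_nonneg ha hb -
    (1 - b * b⁻¹) * Meadow.ril a

end IsSign

/-- every signed meadow is formally real, i.e. satisfies every
instance of `EFR_n`: `0_{x₀²+⋯+xₙ²} · x₀ = 0`. -/
theorem signedMeadow_formallyReal (M : Type) [Meadow M] (sg : M → M)
    (hs : IsSign M sg) (n : ℕ) (x : Fin (n + 1) → M) :
    (1 - (∑ i, x i ^ 2) * (∑ i, x i ^ 2)⁻¹) * x 0 = 0 := by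
  rw [Fin.sum_univ_succ]
  set T := ∑ i : Fin n, x i.succ ^ 2
  have hT : sg T = T * T⁻¹ := hs.nonneg_sum _ _ fun i _ => hs.nonneg_sq (x i.succ)
  have hkill := hs.one_sub_mul_inv_mul_left_of_nonneg (hs.nonneg_sq (x 0)) hT
  have hidem := (Meadow.isIdempotentElem_mul_inv (x 0 ^ 2 + T)).one_sub.eq
  apply Meadow.eq_zero_of_mul_self_eq_zero
  linear_combination x 0 ^ 2 * hidem + hkill
end
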